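/- Let p be a prime, α ≥ 0, and n a positive integer not divisible by p; set m = p^α·n. Let R be a commutative ring in which every prime factor of n is invertible. Then the canonical ring homomorphism R[X]/(X^m − 1) → ∏_{d ∣ n} R[X]/(Φ_d(X)·Φ_{p·d}(X)⋯Φ_{p^α·d}(X)), induced by the quotient projections and indexed by the positive divisors d of n, is an isomorphism of rings. -/

import Mathlib

/-!
Write `Q_d = ∏_{i ≤ α} Φ_{p^i d}`. Since `p ∤ d`, repeatedly applying `Φ_d(X^p) = Φ_d Φ_{pd}` and
`Φ_k(X^p) = Φ_{pk}` (for `p ∣ k`) telescopes to `Q_d = Φ_d(X^{p^α})`. Hence `∏_{d ∣ n} Q_d` is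
`X^n - 1` evaluated at `X^{p^α}`, i.e. `X^m - 1`. As `n` is a unit in `R`, `X^n - 1` is separable,
so its factors `Φ_d` are pairwise coprime, and so are their images `Q_d` under the ring map
`X ↦ X^{p^α}`. The Chinese remainder theorem finishes the proof.
-/

open Function Polynomial

theorem Nat.isUnit_cast_of_forall_prime_dvd {R : Type*} [CommRing R] {n : ℕ} (hn : n ≠ 0)
    (h : ∀ q : ℕ, q.Prime → q ∣ n → IsUnit (q : R)) : IsUnit (n : R) := by
  rw [← Nat.prod_primeFactorsList hn, Nat.cast_list_prod]
  refine List.prod_isUnit fun u hu => ?_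
  obtain ⟨q, hq, rfl⟩ := List.mem_map.mp hu
  exact h q (Nat.prime_of_mem_primeFactorsList hq) (Nat.dvd_of_mem_primeFactorsList hq)

namespace Ideal

variable {S ι : Type*} [CommRing S] [Fintype ι]

noncomputable def quotientSpanProdEquivPi (Q : ι → S) (hQ : Pairwise (IsCoprime on Q)) :
    S ⧸ span {∏ i, Q i} ≃+* ((i : ι) → S ⧸ span {Q i}) :=
  (quotEquivOfEq (iInf_span_singleton hQ).symm).trans
    (quotientInfRingEquivPiQuotient _ fun _ _ hij =>
      (isCoprime_span_singleton_iff _ _).mpr (hQ hij))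

theorem quotientSpanProdEquivPi_mk (Q : ι → S) (hQ : Pairwise (IsCoprime on Q)) (f : S) (i : ι) :
    quotientSpanProdEquivPi Q hQ (Quotient.mk _ f) i = Quotient.mk _ f :=
  rfl

end Ideal

namespace Polynomial

variable {R : Type*} [CommRing R]

theorem expand_prime_pow_cyclotomic {p k : ℕ} (hp : p.Prime) (hk : p ∣ k) (α : ℕ) :
    expand R (p ^ α) (cyclotomic k R) = cyclotomic (p ^ α * k) R := by
  induction α generalizing k with
  | zero => simp
  | succ α ih =>
    rw [pow_succ, ← expand_expand, cyclotomic_expand_eq_cyclotomic hp hk,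
      ih (hk.mul_right p)]
    ring_nf

theorem prod_range_cyclotomic_prime_pow_mul {p d : ℕ} (hp : p.Prime) (hd : ¬p ∣ d) (α : ℕ) :
    ∏ i ∈ Finset.range (α + 1), cyclotomic (p ^ i * d) R = expand R (p ^ α) (cyclotomic d R) := by
  induction α with
  | zero => simp
  | succ α ih =>
    rw [Finset.prod_range_succ, ih, pow_succ, ← expand_expand,
      cyclotomic_expand_eq_cyclotomic_mul hp hd, map_mul,
      expand_prime_pow_cyclotomic hp (dvd_mul_left p d), mul_comm, mul_assoc, mul_comm d]

theorem prod_divisors_expand_cyclotomic {n : ℕ} (hn : 0 < n) (k : ℕ) :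
    ∏ d ∈ n.divisors, expand R k (cyclotomic d R) = X ^ (k * n) - 1 := by
  rw [← map_prod, prod_cyclotomic_eq_X_pow_sub_one hn, map_sub, map_one, map_pow, expand_X,
    pow_mul]

theorem isCoprime_cyclotomic_of_mem_divisors {n d d' : ℕ} (hn : IsUnit (n : R))
    (hd : d ∈ n.divisors) (hd' : d' ∈ n.divisors) (hne : d ≠ d') :
    IsCoprime (cyclotomic d R) (cyclotomic d' R) := by
  have hsep : (X ^ n - 1 : R[X]).Separable := by
    simpa using separable_X_pow_sub_C_unit (1 : Rˣ) hn
  have hdvd : cyclotomic d R * cyclotomic d' R ∣ X ^ n - 1 := by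
    rw [← prod_cyclotomic_eq_X_pow_sub_one (Nat.pos_of_ne_zero (Nat.mem_divisors.mp hd).2) R,
      ← Finset.prod_pair (f := (cyclotomic · R)) hne]
    exact Finset.prod_dvd_prod_of_subset _ _ _ (Finset.insert_subset hd (by simpa using hd'))
  exact (hsep.of_dvd hdvd).isCoprime

end Polynomial

/-- For `m = p^α · n` with `p ∤ n` and every prime factor of `n` invertible in `R`, the
canonical ring homomorphism
`R[X]/(X^m - 1) → ∏_{d ∣ n} R[X]/(Φ_d · Φ_{p·d} ⋯ Φ_{p^α·d})` is an isomorphism. -/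
theorem stmt14 {R : Type*} [CommRing R] (p : ℕ) (hp : p.Prime) (α : ℕ) (n : ℕ) (hn : 0 < n)
    (hpn : ¬ p ∣ n) (hR : ∀ q : ℕ, q.Prime → q ∣ n → IsUnit (q : R)) :
    ∃ e : (R[X] ⧸ Ideal.span {(X : R[X]) ^ (p ^ α * n) - 1}) ≃+*
        ((d : n.divisors) →
          R[X] ⧸ Ideal.span {∏ i ∈ Finset.range (α + 1), cyclotomic (p ^ i * (d : ℕ)) R}),
      ∀ (f : R[X]) (d : n.divisors),
        e (Ideal.Quotient.mk (Ideal.span {(X : R[X]) ^ (p ^ α * n) - 1}) f) d =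
          Ideal.Quotient.mk
            (Ideal.span {∏ i ∈ Finset.range (α + 1), cyclotomic (p ^ i * (d : ℕ)) R}) f := by
  set Q : n.divisors → R[X] := fun d => ∏ i ∈ Finset.range (α + 1), cyclotomic (p ^ i * d) R
  have hQ (d : n.divisors) : Q d = expand R (p ^ α) (cyclotomic d R) :=
    prod_range_cyclotomic_prime_pow_mul hp (fun h => hpn (h.trans (Nat.dvd_of_mem_divisors d.2))) α
  have hunit : IsUnit (n : R) := Nat.isUnit_cast_of_forall_prime_dvd hn.ne' hR
  have hcop : Pairwise (IsCoprime on Q) := fun d d' hne => by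
    simp only [onFun, hQ]
    exact (isCoprime_cyclotomic_of_mem_divisors hunit d.2 d'.2
      (Subtype.coe_injective.ne hne)).map _
  have hprod : ∏ d, Q d = X ^ (p ^ α * n) - 1 := by
    rw [← prod_divisors_expand_cyclotomic hn, ← Finset.prod_coe_sort n.divisors]
    exact Finset.prod_congr rfl fun d _ => hQ d
  rw [← hprod]
  exact ⟨Ideal.quotientSpanProdEquivPi Q hcop, Ideal.quotientSpanProdEquivPi_mk Q hcop⟩
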